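/- Characterization of the characteristic covectors of the Euler–Nordström equations of variation: Fix a background state Ṽ ∈ ℝ¹⁰ with P̃ > 0, R̃ + P̃ > 0, Q̃ > 0 and sound speed 0 < σ̃ < 1. The symbol σ_ξ at a covector ξ ∈ ℝ⁴ is the linear operator on ℝ¹⁰ obtained by replacing each derivative ∂_λ𝒰 by ξ_λ𝒰̇ in the (homogeneous) equations of variation. Then σ_ξ has a nontrivial null space if and only if at least one of the following holds: (i) Ũ^μ ξ_μ = 0; (ii) (h̃⁻¹)^{μν} ξ_μ ξ_ν = 0, where (h̃⁻¹)^{μν} := g^{μν} − (σ̃⁻² − 1)Ũ^μŨ^ν is the reciprocal acoustical metric; (iii) g^{μν} ξ_μ ξ_ν = 0; (iv) ξ₀ = 0. Equivalently, the characteristic form equals 𝒬(ξ) = (ξ₀)³ (Ũ^λ ξ_λ)³ (h̃⁻¹)^{μν} g^{αβ} ξ_μ ξ_ν ξ_α ξ_β, and the characteristic subset is its zero set. -/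

import Mathlib

noncomputable section
open MeasureTheory Real Set Filter Metric

namespace EN

/-- Space: `ℝ³`. -/
abbrev Sp : Type := Fin 3 → ℝ
/-- Spacetime: `ℝ^{1+3}`. -/
abbrev Spt : Type := Fin 4 → ℝ
/-- State space: `ℝ¹⁰`, components `(S, P, U¹, U², U³, φ, ψ₀, ψ₁, ψ₂, ψ₃)`. -/
abbrev St : Type := Fin 10 → ℝ

/-- The spacetime point with time `t` and spatial part `s`. -/
def st (t : ℝ) (s : Sp) : Spt := Fin.cons t s

/-- The spatial part of a spacetime point. -/
def sp (x : Spt) : Sp := fun k => x k.succ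

/-- Standard basis of spacetime. -/
def e4 (μ : Fin 4) : Spt := fun ν => if ν = μ then 1 else 0

/-- Standard basis of space. -/
def e3 (k : Fin 3) : Sp := fun j => if j = k then 1 else 0

/-- The partial derivative `∂_μ f` of a scalar function on spacetime. -/
def pd (μ : Fin 4) (f : Spt → ℝ) (x : Spt) : ℝ := fderiv ℝ f x (e4 μ)

/-- Iterated spatial partial derivative `∂_α` along a list of spatial directions. -/
def pdIter : List (Fin 3) → (Spt → ℝ) → Spt → ℝ
  | [], f => f
  | k :: l, f => pd k.succ (pdIter l f)

/-- Entropy component. -/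
def Sc (V : St) : ℝ := V 0
/-- Pressure component. -/
def Pc (V : St) : ℝ := V 1
/-- Spatial velocity components `U^k`, `k = 1,2,3`. -/
def Uc (V : St) (k : Fin 3) : ℝ := V ⟨2 + k.val, by have := k.isLt; omega⟩
/-- Nordström potential component `φ`. -/
def Phic (V : St) : ℝ := V 5
/-- Components `ψ_μ`, `μ = 0,…,3`. -/
def Psic (V : St) (μ : Fin 4) : ℝ := V ⟨6 + μ.val, by have := μ.isLt; omega⟩

/-- `U⁰ = (1 + U^k U_k)^{1/2}`. -/
def U0 (V : St) : ℝ := Real.sqrt (1 + ∑ k : Fin 3, (Uc V k) ^ 2)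

/-- The four-velocity `(U⁰, U¹, U², U³)`. -/
def U4 (V : St) : Fin 4 → ℝ := Fin.cons (U0 V) (Uc V)

/-- The inverse Minkowski metric `g^{μν} = diag(-1,1,1,1)`. -/
def gInv (μ ν : Fin 4) : ℝ := if μ = ν then (if μ = 0 then -1 else 1) else 0

/-- `R = e^{4φ} ℛ(S, e^{-4φ} P)`. -/
def Rq (R : ℝ → ℝ → ℝ) (V : St) : ℝ :=
  exp (4 * Phic V) * R (Sc V) (exp (-(4 * Phic V)) * Pc V)

/-- sound speed `σ = 𝒮(S, e^{-4φ}P)`. -/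
def sigq (S : ℝ → ℝ → ℝ) (V : St) : ℝ := S (Sc V) (exp (-(4 * Phic V)) * Pc V)

/-- `Q = 𝒮²(S, e^{-4φ}P)(R + P)`. -/
def Qq (R S : ℝ → ℝ → ℝ) (V : St) : ℝ := (sigq S V) ^ 2 * (Rq R V + Pc V)

/-- `Π^{μν} = U^μ U^ν + g^{μν}`. -/
def Piq (V : St) (μ ν : Fin 4) : ℝ := U4 V μ * U4 V ν + gInv μ ν

/-- Equation-of-state assumptions: `ℛ, 𝒮` smooth, `ℛ > 0`, `0 < 𝒮 < 1`. -/
def GoodEOS (R S : ℝ → ℝ → ℝ) : Prop :=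
  ContDiff ℝ (⊤ : ℕ∞) (fun p : ℝ × ℝ => R p.1 p.2) ∧
  ContDiff ℝ (⊤ : ℕ∞) (fun p : ℝ × ℝ => S p.1 p.2) ∧
  (∀ a b, 0 < R a b) ∧ (∀ a b, 0 < S a b ∧ S a b < 1)

/-- The admissible subset of state space: `S > 0`, `P > 0`. -/
def adm : Set St := {V | 0 < Sc V ∧ 0 < Pc V}

/-- The spacetime slab `[0,T] × ℝ³`. -/
def slab (T : ℝ) : Set Spt := {x | x 0 ∈ Icc (0 : ℝ) T}

/-- The equations of variation (EOV) defined by the background `W`,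
with unknown `Vd` and inhomogeneous terms `(f, g, h, l0, lj, l4)`. -/
structure IsEOVSol (R S : ℝ → ℝ → ℝ) (W Vd : Spt → St)
    (f g : Spt → ℝ) (h : Spt → Fin 3 → ℝ)
    (l0 : Spt → ℝ) (lj : Spt → Fin 3 → ℝ) (l4 : Spt → ℝ) (D : Set Spt) : Prop where
  eS : ∀ x ∈ D, (∑ μ, U4 (W x) μ * pd μ (fun y => Sc (Vd y)) x) = f x
  eP : ∀ x ∈ D,
    (∑ μ, U4 (W x) μ * pd μ (fun y => Pc (Vd y)) x)
      + Qq R S (W x) * (∑ k : Fin 3, (Uc (W x) k / U0 (W x)) * pd 0 (fun y => Uc (Vd y) k) x)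
      + Qq R S (W x) * (∑ k : Fin 3, pd k.succ (fun y => Uc (Vd y) k) x) = g x
  eU : ∀ x ∈ D, ∀ j : Fin 3,
    (Rq R (W x) + Pc (W x)) * (∑ μ, U4 (W x) μ * pd μ (fun y => Uc (Vd y) j) x)
      + (∑ μ, Piq (W x) μ j.succ * pd μ (fun y => Pc (Vd y)) x) = h x j
  eL0 : ∀ x ∈ D,
    (- pd 0 (fun y => Psic (Vd y) 0) x)
      + (∑ j : Fin 3, pd j.succ (fun y => Psic (Vd y) j.succ) x) = l0 x
  eLj : ∀ x ∈ D, ∀ j : Fin 3,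
    pd 0 (fun y => Psic (Vd y) j.succ) x - pd j.succ (fun y => Psic (Vd y) 0) x = lj x j
  eL4 : ∀ x ∈ D, pd 0 (fun y => Phic (Vd y)) x = l4 x

/-- The linearization of the EN_κ system around the background `W`. -/
def IsLinSol (κ2 : ℝ) (R S : ℝ → ℝ → ℝ) (W Vd : Spt → St) (D : Set Spt) : Prop :=
  IsEOVSol R S W Vd
    (fun _ => 0)
    (fun x => (4 * Pc (W x) - 3 * Qq R S (W x)) * ∑ μ, U4 (W x) μ * Psic (W x) μ)
    (fun x j => (3 * Pc (W x) - Rq R (W x)) * ∑ μ, Piq (W x) μ j.succ * Psic (W x) μ)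
    (fun x => κ2 * Phic (W x) + Rq R (W x) - 3 * Pc (W x))
    (fun _ _ => 0)
    (fun x => Psic (W x) 0) D

/-- The EN_κ system: the linearization around the solution itself. -/
def IsENSol (κ2 : ℝ) (R S : ℝ → ℝ → ℝ) (V : Spt → St) (D : Set Spt) : Prop :=
  IsLinSol κ2 R S V V D

/-- Sobolev "norm" of order `N` of a function on `ℝ³`, restricted to a set `A`. -/
def SobNormOn (N : ℕ) {E : Type*} [NormedAddCommGroup E] [NormedSpace ℝ E]
    (f : Sp → E) (A : Set Sp) : ℝ :=
  ∑ i ∈ Finset.range (N + 1),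
    (eLpNorm (fun s => iteratedFDeriv ℝ i f s) 2 (volume.restrict A)).toReal

/-- Sobolev norm of order `N` on all of `ℝ³`. -/
def SobNorm (N : ℕ) {E : Type*} [NormedAddCommGroup E] [NormedSpace ℝ E] (f : Sp → E) : ℝ :=
  SobNormOn N f Set.univ

/-- Membership in `H^N(ℝ³)`. -/
def MemHN (N : ℕ) {E : Type*} [NormedAddCommGroup E] [NormedSpace ℝ E] (f : Sp → E) : Prop :=
  ∀ i ≤ N, MemLp (fun s => iteratedFDeriv ℝ i f s) 2 volume

/-- The constant background state `V̄ = (S̄, P̄, 0,0,0, φ̄, 0,0,0,0)`. -/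
def backV (Sb Pb phib : ℝ) : St := fun i =>
  if i = 0 then Sb else if i = 1 then Pb else if i = 5 then phib else 0

/-- The time derivative of `V`, restricted to the slice at time `t`. -/
def tderivSlice (V : Spt → St) (t : ℝ) (s : Sp) : St := fun i => pd 0 (fun y => V y i) (st t s)

/-- `F : [0,T] → H^N` is continuous. -/
def ContInHN (N : ℕ) (T : ℝ) {E : Type*} [NormedAddCommGroup E] [NormedSpace ℝ E]
    (F : ℝ → Sp → E) : Prop :=
  (∀ t ∈ Icc (0 : ℝ) T, MemHN N (F t)) ∧
  ∀ t₀ ∈ Icc (0 : ℝ) T,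
    Tendsto (fun t => SobNorm N (fun s => F t s - F t₀ s)) (nhdsWithin t₀ (Icc 0 T)) (nhds 0)

/-- `F : [0,T] → H^N` is differentiable with derivative `F'`. -/
def DerivInHN (N : ℕ) (T : ℝ) {E : Type*} [NormedAddCommGroup E] [NormedSpace ℝ E]
    (F F' : ℝ → Sp → E) : Prop :=
  ∀ t₀ ∈ Icc (0 : ℝ) T,
    Tendsto
      (fun t => SobNorm N (fun s => F t s - F t₀ s - (t - t₀) • F' t₀ s) / |t - t₀|)
      (nhdsWithin t₀ (Icc 0 T \ {t₀})) (nhds 0)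

/-- `t ↦ V(t)` belongs to `C¹([0,T], H^N)`, with derivative the slice of `∂_t V`. -/
def C1InHN (N : ℕ) (T : ℝ) (V : Spt → St) : Prop :=
  ContInHN N T (fun t => tderivSlice V t) ∧
  DerivInHN N T (fun t s => V (st t s)) (fun t => tderivSlice V t)

/-- `f ∈ C_b^k(D)`: `k` times continuously differentiable on `D` with bounded derivatives. -/
def CbOn (k : ℕ) {E : Type*} [NormedAddCommGroup E] [NormedSpace ℝ E]
    (f : Spt → E) (D : Set Spt) : Prop :=
  ContDiffOn ℝ k f D ∧ ∃ M, ∀ x ∈ D, ∀ i ≤ k, ‖iteratedFDerivWithin ℝ i f D x‖ ≤ M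

/-- The assumptions on the initial data: an `H^N` perturbation (`N ≥ 3`) of the constant
state `V̄`, agreeing with `V̄` outside the unit ball, with values in the compact set `K ⊆ 𝒪`,
and with `ψ̊_j = ∂_j φ̊`. -/
structure GoodData (κ2 : ℝ) (R S : ℝ → ℝ → ℝ) (N : ℕ) (Sb pb phib : ℝ) (K : Set St)
    (Vdat : Sp → St) : Prop where
  kpos : 0 < κ2
  eos : GoodEOS R S
  hN : 3 ≤ N
  Sbpos : 0 < Sb
  pbpos : 0 < pb
  phibEq : κ2 * phib + exp (4 * phib) * (R Sb pb - 3 * pb) = 0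
  Kcpt : IsCompact K
  Ksub : K ⊆ adm
  datMem : ∀ s, Vdat s ∈ K
  datSob : MemHN N (fun s => Vdat s - backV Sb (exp (4 * phib) * pb) phib)
  datSobPhi : MemHN (N + 1) (fun s => Phic (Vdat s) - phib)
  datOutside : ∀ s : Sp, 1 < ‖s‖ → Vdat s = backV Sb (exp (4 * phib) * pb) phib
  datPsi : ∀ s, ∀ j : Fin 3, Psic (Vdat s) j.succ = fderiv ℝ (fun y => Phic (Vdat y)) s (e3 j)

/-- `V` is a classical solution of the EN_κ system on `[0,T] × ℝ³` launched by the data `Vdat`,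
taking values in `O2c`, with the regularity
`V - V̄ ∈ C_b¹([0,T]×ℝ³) ∩ C⁰([0,T],H^N) ∩ C¹([0,T],H^{N-1})`. -/
def LaunchesSol (κ2 : ℝ) (R S : ℝ → ℝ → ℝ) (N : ℕ) (Vb : St) (O2c : Set St)
    (Vdat : Sp → St) (T : ℝ) (V : Spt → St) : Prop :=
  IsENSol κ2 R S V (slab T) ∧
  (∀ s, V (st 0 s) = Vdat s) ∧
  (∀ x ∈ slab T, V x ∈ O2c) ∧
  CbOn 1 (fun x => V x - Vb) (slab T) ∧
  ContInHN N T (fun t s => V (st t s) - Vb) ∧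
  C1InHN (N - 1) T V

/-- The time component `J̇⁰` of the energy current of the variation `Vd` with coefficients
defined by the background `W`. -/
def J0 (R S : ℝ → ℝ → ℝ) (W Vd : St) : ℝ :=
  U0 W * (Sc Vd) ^ 2 + (U0 W / Qq R S W) * (Pc Vd) ^ 2
    + 2 * ((∑ k : Fin 3, Uc W k * Uc Vd k) / U0 W) * Pc Vd
    + (Rq R W + Pc W) * U0 W *
        ((∑ k : Fin 3, (Uc Vd k) ^ 2) - (∑ k : Fin 3, Uc W k * Uc Vd k) ^ 2 / (U0 W) ^ 2)
    + (1 / 2) * ((Phic Vd) ^ 2 + ∑ μ : Fin 4, (Psic Vd μ) ^ 2)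

/-- The spatial components `J̇^j` of the energy current. -/
def Jsp (R S : ℝ → ℝ → ℝ) (W Vd : St) (j : Fin 3) : ℝ :=
  Uc W j * (Sc Vd) ^ 2 + (Uc W j / Qq R S W) * (Pc Vd) ^ 2 + 2 * Uc Vd j * Pc Vd
    + (Rq R W + Pc W) * Uc W j *
        ((∑ k : Fin 3, (Uc Vd k) ^ 2) - (∑ k : Fin 3, Uc W k * Uc Vd k) ^ 2 / (U0 W) ^ 2)
    - Psic Vd 0 * Psic Vd j.succ

/-- The spacetime divergence `∂_μ J̇^μ` of the energy current of the variation `Vd` with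
coefficients defined by the background `W`. -/
def divJ (R S : ℝ → ℝ → ℝ) (W Vd : Spt → St) (x : Spt) : ℝ :=
  pd 0 (fun y => J0 R S (W y) (Vd y)) x
    + ∑ j : Fin 3, pd j.succ (fun y => Jsp R S (W y) (Vd y) j) x

/-- The higher-order variation `∂_α V̇` for a spatial multi-index `α`. -/
def DerVar (α : List (Fin 3)) (Vd : Spt → St) : Spt → St :=
  fun x i => pdIter α (fun y => Vd y i) x


/-- The reciprocal acoustical metric `(h̃⁻¹)^{μν} = g^{μν} − (σ̃⁻² − 1) Ũ^μ Ũ^ν`. -/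
def hInv (S : ℝ → ℝ → ℝ) (W : St) (μ ν : Fin 4) : ℝ :=
  gInv μ ν - ((sigq S W)⁻¹ ^ 2 - 1) * U4 W μ * U4 W ν

/-- The characteristic form
`𝒬(ξ) = (ξ₀)³ (Ũ^λξ_λ)³ (h̃⁻¹)^{μν}ξ_μξ_ν g^{αβ}ξ_αξ_β`. -/
def Qform (R S : ℝ → ℝ → ℝ) (W : St) (ξ : Fin 4 → ℝ) : ℝ :=
  (ξ 0) ^ 3 * (∑ μ, U4 W μ * ξ μ) ^ 3
    * (∑ μ, ∑ ν, hInv S W μ ν * ξ μ * ξ ν)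
    * (∑ α, ∑ β, gInv α β * ξ α * ξ β)

/-- `V̇` lies in the null space of the symbol `σ_ξ` of the equations of variation:
the algebraic system obtained from the homogeneous EOV by `∂_λ𝒰 ↦ ξ_λ𝒰̇`. -/
def SymbolNull (R S : ℝ → ℝ → ℝ) (W : St) (ξ : Fin 4 → ℝ) (Vd : St) : Prop :=
  (∑ μ, U4 W μ * ξ μ) * Sc Vd = 0 ∧
  (∑ μ, U4 W μ * ξ μ) * Pc Vd
      + Qq R S W * (∑ k : Fin 3, (Uc W k / U0 W) * ξ 0 * Uc Vd k)
      + Qq R S W * (∑ k : Fin 3, ξ k.succ * Uc Vd k) = 0 ∧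
  (∀ j : Fin 3,
    (Rq R W + Pc W) * (∑ μ, U4 W μ * ξ μ) * Uc Vd j
      + (∑ μ, Piq W μ j.succ * ξ μ) * Pc Vd = 0) ∧
  (∑ μ, ∑ ν, gInv μ ν * ξ μ * Psic Vd ν) = 0 ∧
  (∀ j : Fin 3, ξ 0 * Psic Vd j.succ - ξ j.succ * Psic Vd 0 = 0) ∧
  ξ 0 * Phic Vd = 0

lemma fin3cases : ∀ j : Fin 3, j = 0 ∨ j = 1 ∨ j = 2 := by decide
lemma U4_zero (W : St) : U4 W 0 = U0 W := rfl
lemma U4_one (W : St) : U4 W 1 = Uc W 0 := rfl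
lemma U4_two (W : St) : U4 W 2 = Uc W 1 := rfl
lemma U4_three (W : St) : U4 W 3 = Uc W 2 := rfl

lemma uExp (W : St) (ξ : Fin 4 → ℝ) :
    ∑ μ, U4 W μ * ξ μ = U0 W * ξ 0 + Uc W 0 * ξ 1 + Uc W 1 * ξ 2 + Uc W 2 * ξ 3 := by
  rw [Fin.sum_univ_four]; rfl

lemma gExp (ξ ψ : Fin 4 → ℝ) :
    ∑ μ, ∑ ν, gInv μ ν * ξ μ * ψ ν
      = -(ξ 0 * ψ 0) + ξ 1 * ψ 1 + ξ 2 * ψ 2 + ξ 3 * ψ 3 := by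
  simp (config := { decide := true }) only [Fin.sum_univ_four, gInv, if_true, if_false]
  ring

lemma hExp (S : ℝ → ℝ → ℝ) (W : St) (ξ : Fin 4 → ℝ) :
    ∑ μ, ∑ ν, hInv S W μ ν * ξ μ * ξ ν
      = (∑ μ, ∑ ν, gInv μ ν * ξ μ * ξ ν)
          - ((sigq S W)⁻¹ ^ 2 - 1) * (∑ μ, U4 W μ * ξ μ) ^ 2 := by
  simp only [hInv, Fin.sum_univ_four]
  ring

lemma piExp (W : St) (ξ : Fin 4 → ℝ) (j : Fin 3) :
    ∑ μ, Piq W μ j.succ * ξ μ = Uc W j * (∑ μ, U4 W μ * ξ μ) + ξ j.succ := by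
  rcases fin3cases j with h | h | h <;> subst h <;>
  · simp (config := { decide := true }) only [Fin.sum_univ_four, Piq, gInv, U4_zero, U4_one,
      U4_two, U4_three, show ((0:Fin 3).succ = (1:Fin 4)) from rfl,
      show ((1:Fin 3).succ = (2:Fin 4)) from rfl,
      show ((2:Fin 3).succ = (3:Fin 4)) from rfl, if_true, if_false]
    ring

/-- **Characterization of the characteristic covectors.** For a background
with `P̃ > 0`, `R̃ + P̃ > 0`, `Q̃ > 0` and `0 < σ̃ < 1`, the symbol `σ_ξ` has a nontrivial
null space iff `Ũ^μξ_μ = 0`, or `(h̃⁻¹)^{μν}ξ_μξ_ν = 0`, or `g^{μν}ξ_μξ_ν = 0`, or `ξ₀ = 0`;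
equivalently, iff the characteristic form `𝒬(ξ)` vanishes. -/
theorem characteristic_covectors
    (R S : ℝ → ℝ → ℝ) (hEOS : GoodEOS R S) (W : St)
    (hP : 0 < Pc W) (hRP : 0 < Rq R W + Pc W) (hQ : 0 < Qq R S W)
    (hsig : 0 < sigq S W ∧ sigq S W < 1)
    (ξ : Fin 4 → ℝ) :
    ((∃ Vd : St, Vd ≠ 0 ∧ SymbolNull R S W ξ Vd) ↔
      ((∑ μ, U4 W μ * ξ μ) = 0 ∨
       (∑ μ, ∑ ν, hInv S W μ ν * ξ μ * ξ ν) = 0 ∨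
       (∑ μ, ∑ ν, gInv μ ν * ξ μ * ξ ν) = 0 ∨
       ξ 0 = 0)) ∧
    ((∃ Vd : St, Vd ≠ 0 ∧ SymbolNull R S W ξ Vd) ↔ Qform R S W ξ = 0) := by
  obtain ⟨hσ0, hσ1⟩ := hsig
  have hσne : sigq S W ≠ 0 := ne_of_gt hσ0
  have hσI : sigq S W * (sigq S W)⁻¹ = 1 := mul_inv_cancel₀ hσne
  have hu0pos : 0 < U0 W := Real.sqrt_pos.mpr (by positivity)
  have hu0ne : U0 W ≠ 0 := ne_of_gt hu0pos
  have hI : U0 W * (U0 W)⁻¹ = 1 := mul_inv_cancel₀ hu0ne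
  have hU0sq : U0 W ^ 2 = 1 + (Uc W 0 ^ 2 + Uc W 1 ^ 2 + Uc W 2 ^ 2) := by
    rw [U0, sq_sqrt (by positivity), Fin.sum_univ_three]
  have hRPne : Rq R W + Pc W ≠ 0 := ne_of_gt hRP
  have hQne : Qq R S W ≠ 0 := ne_of_gt hQ
  have hqval : Qq R S W = sigq S W ^ 2 * (Rq R W + Pc W) := rfl
  -- the Z-identity: (r+p)U² - q(U²+G) = -(r+p)σ² H
  have hZ : (Rq R W + Pc W) * (U0 W * ξ 0 + Uc W 0 * ξ 1 + Uc W 1 * ξ 2 + Uc W 2 * ξ 3) ^ 2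
        - Qq R S W * ((U0 W * ξ 0 + Uc W 0 * ξ 1 + Uc W 1 * ξ 2 + Uc W 2 * ξ 3) ^ 2
            + (-(ξ 0 * ξ 0) + ξ 1 * ξ 1 + ξ 2 * ξ 2 + ξ 3 * ξ 3))
      = -((Rq R W + Pc W) * sigq S W ^ 2) * (∑ μ, ∑ ν, hInv S W μ ν * ξ μ * ξ ν) := by
    rw [hExp, gExp, uExp]
    linear_combination
      (-(((U0 W * ξ 0 + Uc W 0 * ξ 1 + Uc W 1 * ξ 2 + Uc W 2 * ξ 3)) ^ 2
          + (-(ξ 0 * ξ 0) + ξ 1 * ξ 1 + ξ 2 * ξ 2 + ξ 3 * ξ 3))) * hqval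
        - ((Rq R W + Pc W) * ((U0 W * ξ 0 + Uc W 0 * ξ 1 + Uc W 1 * ξ 2 + Uc W 2 * ξ 3)) ^ 2
            * (sigq S W * (sigq S W)⁻¹ + 1)) * hσI
  have main : (∃ Vd : St, Vd ≠ 0 ∧ SymbolNull R S W ξ Vd) ↔
      ((∑ μ, U4 W μ * ξ μ) = 0 ∨
       (∑ μ, ∑ ν, hInv S W μ ν * ξ μ * ξ ν) = 0 ∨
       (∑ μ, ∑ ν, gInv μ ν * ξ μ * ξ ν) = 0 ∨
       ξ 0 = 0) := by
    constructor
    · rintro ⟨Vd, hVd, h1, h2, h3, h4, h5, h6⟩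
      by_contra hcon
      push_neg at hcon
      obtain ⟨hune, hHne, hGne, hx0ne⟩ := hcon
      apply hVd
      have hS : Sc Vd = 0 := (mul_eq_zero.mp h1).resolve_left hune
      have hPhi : Phic Vd = 0 := (mul_eq_zero.mp h6).resolve_left hx0ne
      -- the ψ components
      rw [gExp] at h4 hGne
      have h50 : ξ 0 * Psic Vd 1 - ξ 1 * Psic Vd 0 = 0 := h5 0
      have h51 : ξ 0 * Psic Vd 2 - ξ 2 * Psic Vd 0 = 0 := h5 1
      have h52 : ξ 0 * Psic Vd 3 - ξ 3 * Psic Vd 0 = 0 := h5 2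
      have hψ0 : Psic Vd 0 = 0 := by
        have hz : (-(ξ 0 * ξ 0) + ξ 1 * ξ 1 + ξ 2 * ξ 2 + ξ 3 * ξ 3) * Psic Vd 0 = 0 := by
          linear_combination ξ 0 * h4 - ξ 1 * h50 - ξ 2 * h51 - ξ 3 * h52
        exact (mul_eq_zero.mp hz).resolve_left hGne
      have hψ1 : Psic Vd 1 = 0 := by
        have : ξ 0 * Psic Vd 1 = 0 := by linear_combination h50 + ξ 1 * hψ0
        exact (mul_eq_zero.mp this).resolve_left hx0ne
      have hψ2 : Psic Vd 2 = 0 := by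
        have : ξ 0 * Psic Vd 2 = 0 := by linear_combination h51 + ξ 2 * hψ0
        exact (mul_eq_zero.mp this).resolve_left hx0ne
      have hψ3 : Psic Vd 3 = 0 := by
        have : ξ 0 * Psic Vd 3 = 0 := by linear_combination h52 + ξ 3 * hψ0
        exact (mul_eq_zero.mp this).resolve_left hx0ne
      -- the fluid components
      have h30 := h3 0
      have h31 := h3 1
      have h32 := h3 2
      rw [piExp W ξ 0] at h30
      rw [piExp W ξ 1] at h31
      rw [piExp W ξ 2] at h32
      rw [uExp] at h30 h31 h32 hune
      simp only [Fin.sum_univ_three] at h2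
      rw [uExp] at h2
      have h2' : (U0 W * ξ 0 + Uc W 0 * ξ 1 + Uc W 1 * ξ 2 + Uc W 2 * ξ 3) * Pc Vd
          + Qq R S W * ((Uc W 0 / U0 W) * ξ 0 * Uc Vd 0 + (Uc W 1 / U0 W) * ξ 0 * Uc Vd 1
              + (Uc W 2 / U0 W) * ξ 0 * Uc Vd 2)
          + Qq R S W * (ξ 1 * Uc Vd 0 + ξ 2 * Uc Vd 1 + ξ 3 * Uc Vd 2) = 0 := h2
      have h30' : (Rq R W + Pc W) * (U0 W * ξ 0 + Uc W 0 * ξ 1 + Uc W 1 * ξ 2 + Uc W 2 * ξ 3)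
            * Uc Vd 0
          + (Uc W 0 * (U0 W * ξ 0 + Uc W 0 * ξ 1 + Uc W 1 * ξ 2 + Uc W 2 * ξ 3) + ξ 1)
            * Pc Vd = 0 := h30
      have h31' : (Rq R W + Pc W) * (U0 W * ξ 0 + Uc W 0 * ξ 1 + Uc W 1 * ξ 2 + Uc W 2 * ξ 3)
            * Uc Vd 1
          + (Uc W 1 * (U0 W * ξ 0 + Uc W 0 * ξ 1 + Uc W 1 * ξ 2 + Uc W 2 * ξ 3) + ξ 2)
            * Pc Vd = 0 := h31
      have h32' : (Rq R W + Pc W) * (U0 W * ξ 0 + Uc W 0 * ξ 1 + Uc W 1 * ξ 2 + Uc W 2 * ξ 3)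
            * Uc Vd 2
          + (Uc W 2 * (U0 W * ξ 0 + Uc W 0 * ξ 1 + Uc W 1 * ξ 2 + Uc W 2 * ξ 3) + ξ 3)
            * Pc Vd = 0 := h32
      -- division-free form of h2'
      have h2'' : U0 W * ((U0 W * ξ 0 + Uc W 0 * ξ 1 + Uc W 1 * ξ 2 + Uc W 2 * ξ 3) * Pc Vd)
          + Qq R S W * ξ 0 * (Uc W 0 * Uc Vd 0 + Uc W 1 * Uc Vd 1 + Uc W 2 * Uc Vd 2)
          + U0 W * Qq R S W * (ξ 1 * Uc Vd 0 + ξ 2 * Uc Vd 1 + ξ 3 * Uc Vd 2) = 0 := by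
        linear_combination (U0 W) * h2'
          - (Qq R S W * ξ 0 * (Uc W 0 * Uc Vd 0 + Uc W 1 * Uc Vd 1 + Uc W 2 * Uc Vd 2)) * hI
      have hPZ : Pc Vd * (U0 W *
          ((Rq R W + Pc W) * (U0 W * ξ 0 + Uc W 0 * ξ 1 + Uc W 1 * ξ 2 + Uc W 2 * ξ 3) ^ 2
            - Qq R S W * ((U0 W * ξ 0 + Uc W 0 * ξ 1 + Uc W 1 * ξ 2 + Uc W 2 * ξ 3) ^ 2
                + (-(ξ 0 * ξ 0) + ξ 1 * ξ 1 + ξ 2 * ξ 2 + ξ 3 * ξ 3)))) = 0 := by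
        linear_combination
          ((Rq R W + Pc W) * (U0 W * ξ 0 + Uc W 0 * ξ 1 + Uc W 1 * ξ 2 + Uc W 2 * ξ 3)) * h2''
            - (Qq R S W * ξ 0 * Uc W 0 + U0 W * Qq R S W * ξ 1) * h30'
            - (Qq R S W * ξ 0 * Uc W 1 + U0 W * Qq R S W * ξ 2) * h31'
            - (Qq R S W * ξ 0 * Uc W 2 + U0 W * Qq R S W * ξ 3) * h32'
            - (Qq R S W * Pc Vd * ξ 0
                * (U0 W * ξ 0 + Uc W 0 * ξ 1 + Uc W 1 * ξ 2 + Uc W 2 * ξ 3)) * hU0sq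
      have hZne : (Rq R W + Pc W) * (U0 W * ξ 0 + Uc W 0 * ξ 1 + Uc W 1 * ξ 2 + Uc W 2 * ξ 3) ^ 2
          - Qq R S W * ((U0 W * ξ 0 + Uc W 0 * ξ 1 + Uc W 1 * ξ 2 + Uc W 2 * ξ 3) ^ 2
              + (-(ξ 0 * ξ 0) + ξ 1 * ξ 1 + ξ 2 * ξ 2 + ξ 3 * ξ 3)) ≠ 0 := by
        rw [hZ]
        exact mul_ne_zero (neg_ne_zero.mpr (mul_ne_zero hRPne (pow_ne_zero 2 hσne))) hHne
      have hPc : Pc Vd = 0 := by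
        rcases mul_eq_zero.mp hPZ with h | h
        · exact h
        · exact absurd h (mul_ne_zero hu0ne hZne)
      have hRPu : (Rq R W + Pc W) * (U0 W * ξ 0 + Uc W 0 * ξ 1 + Uc W 1 * ξ 2 + Uc W 2 * ξ 3)
          ≠ 0 := mul_ne_zero hRPne hune
      have hV0 : Uc Vd 0 = 0 := by
        have : (Rq R W + Pc W) * (U0 W * ξ 0 + Uc W 0 * ξ 1 + Uc W 1 * ξ 2 + Uc W 2 * ξ 3)
            * Uc Vd 0 = 0 := by linear_combination h30' -
          (Uc W 0 * (U0 W * ξ 0 + Uc W 0 * ξ 1 + Uc W 1 * ξ 2 + Uc W 2 * ξ 3) + ξ 1) * hPc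
        exact (mul_eq_zero.mp this).resolve_left hRPu
      have hV1 : Uc Vd 1 = 0 := by
        have : (Rq R W + Pc W) * (U0 W * ξ 0 + Uc W 0 * ξ 1 + Uc W 1 * ξ 2 + Uc W 2 * ξ 3)
            * Uc Vd 1 = 0 := by linear_combination h31' -
          (Uc W 1 * (U0 W * ξ 0 + Uc W 0 * ξ 1 + Uc W 1 * ξ 2 + Uc W 2 * ξ 3) + ξ 2) * hPc
        exact (mul_eq_zero.mp this).resolve_left hRPu
      have hV2 : Uc Vd 2 = 0 := by
        have : (Rq R W + Pc W) * (U0 W * ξ 0 + Uc W 0 * ξ 1 + Uc W 1 * ξ 2 + Uc W 2 * ξ 3)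
            * Uc Vd 2 = 0 := by linear_combination h32' -
          (Uc W 2 * (U0 W * ξ 0 + Uc W 0 * ξ 1 + Uc W 1 * ξ 2 + Uc W 2 * ξ 3) + ξ 3) * hPc
        exact (mul_eq_zero.mp this).resolve_left hRPu
      funext i
      fin_cases i <;> simp only [Pi.zero_apply]
      exacts [hS, hPc, hV0, hV1, hV2, hPhi, hψ0, hψ1, hψ2, hψ3]
    · -- backward direction: construct null vectors
      have mkS : (∑ μ, U4 W μ * ξ μ) = 0 → ∃ Vd : St, Vd ≠ 0 ∧ SymbolNull R S W ξ Vd := by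
        intro hu
        obtain ⟨Vd, hVdd⟩ : ∃ Vd : St, Vd = ![1, 0, 0, 0, 0, 0, 0, 0, 0, 0] := ⟨_, rfl⟩
        have eP : Pc Vd = 0 := by rw [hVdd]; rfl
        have eU : ∀ k : Fin 3, Uc Vd k = 0 := by intro k; rw [hVdd]; fin_cases k <;> rfl
        have ePhi : Phic Vd = 0 := by rw [hVdd]; rfl
        have ePsi : ∀ μ : Fin 4, Psic Vd μ = 0 := by intro μ; rw [hVdd]; fin_cases μ <;> rfl
        refine ⟨Vd, ?_, ?_, ?_, ?_, ?_, ?_, ?_⟩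
        · intro h; rw [h] at hVdd
          have h1 : (1:ℝ) = 0 := congrFun hVdd.symm 0
          exact one_ne_zero h1
        · rw [hu, zero_mul]
        · simp [hu, eU, eP]
        · intro j; simp [hu, eU j, eP]
        · simp [ePsi]
        · intro j; simp [ePsi]
        · simp [ePhi]
      have mkPhi : ξ 0 = 0 → ∃ Vd : St, Vd ≠ 0 ∧ SymbolNull R S W ξ Vd := by
        intro hx
        obtain ⟨Vd, hVdd⟩ : ∃ Vd : St, Vd = ![0, 0, 0, 0, 0, 1, 0, 0, 0, 0] := ⟨_, rfl⟩
        have eS : Sc Vd = 0 := by rw [hVdd]; rfl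
        have eP : Pc Vd = 0 := by rw [hVdd]; rfl
        have eU : ∀ k : Fin 3, Uc Vd k = 0 := by intro k; rw [hVdd]; fin_cases k <;> rfl
        have ePsi : ∀ μ : Fin 4, Psic Vd μ = 0 := by intro μ; rw [hVdd]; fin_cases μ <;> rfl
        refine ⟨Vd, ?_, ?_, ?_, ?_, ?_, ?_, ?_⟩
        · intro h; rw [h] at hVdd
          have h1 : (1:ℝ) = 0 := congrFun hVdd.symm 5
          exact one_ne_zero h1
        · simp [eS]
        · simp [eU, eP]
        · intro j; simp [eU j, eP]
        · simp [ePsi]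
        · intro j; simp [ePsi]
        · rw [hx, zero_mul]
      rintro (hu | hH | hG | hx)
      · exact mkS hu
      · -- acoustical case
        by_cases hu' : (∑ μ, U4 W μ * ξ μ) = 0
        · exact mkS hu'
        obtain ⟨Vd, hVdd⟩ : ∃ Vd : St, Vd = ![0, (Rq R W + Pc W) * (∑ μ, U4 W μ * ξ μ),
            -(Uc W 0 * (∑ μ, U4 W μ * ξ μ) + ξ 1),
            -(Uc W 1 * (∑ μ, U4 W μ * ξ μ) + ξ 2),
            -(Uc W 2 * (∑ μ, U4 W μ * ξ μ) + ξ 3), 0, 0, 0, 0, 0] := ⟨_, rfl⟩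
        have eS : Sc Vd = 0 := by rw [hVdd]; rfl
        have eP : Pc Vd = (Rq R W + Pc W) * (∑ μ, U4 W μ * ξ μ) := by rw [hVdd]; rfl
        have eU : ∀ j : Fin 3, Uc Vd j = -(Uc W j * (∑ μ, U4 W μ * ξ μ) + ξ j.succ) := by
          intro j; rw [hVdd]; fin_cases j <;> rfl
        have eU0 : Uc Vd 0 = -(Uc W 0 * (∑ μ, U4 W μ * ξ μ) + ξ 1) := eU 0
        have eU1 : Uc Vd 1 = -(Uc W 1 * (∑ μ, U4 W μ * ξ μ) + ξ 2) := eU 1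
        have eU2 : Uc Vd 2 = -(Uc W 2 * (∑ μ, U4 W μ * ξ μ) + ξ 3) := eU 2
        have ePhi : Phic Vd = 0 := by rw [hVdd]; rfl
        have ePsi : ∀ μ : Fin 4, Psic Vd μ = 0 := by intro μ; rw [hVdd]; fin_cases μ <;> rfl
        -- the key scalar relation from (h⁻¹)(ξ,ξ) = 0
        rw [hExp, gExp, uExp] at hH
        have hkey : sigq S W ^ 2 * (-(ξ 0 * ξ 0) + ξ 1 * ξ 1 + ξ 2 * ξ 2 + ξ 3 * ξ 3)
            - (1 - sigq S W ^ 2)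
              * (U0 W * ξ 0 + Uc W 0 * ξ 1 + Uc W 1 * ξ 2 + Uc W 2 * ξ 3) ^ 2 = 0 := by
          linear_combination sigq S W ^ 2 * hH
            + ((sigq S W * (sigq S W)⁻¹ + 1)
                * (U0 W * ξ 0 + Uc W 0 * ξ 1 + Uc W 1 * ξ 2 + Uc W 2 * ξ 3) ^ 2) * hσI
        refine ⟨Vd, ?_, ?_, ?_, ?_, ?_, ?_, ?_⟩
        · intro h
          apply mul_ne_zero hRPne hu'
          rw [← eP, h]; rfl
        · rw [eS, mul_zero]
        · -- pressure equation
          simp only [Fin.sum_univ_three, show ((0:Fin 3).succ = (1:Fin 4)) from rfl,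
            show ((1:Fin 3).succ = (2:Fin 4)) from rfl, show ((2:Fin 3).succ = (3:Fin 4)) from rfl]
          rw [eP, eU0, eU1, eU2, uExp]
          linear_combination
            (-(Rq R W + Pc W)) * hkey
            + (-((U0 W * ξ 0 + Uc W 0 * ξ 1 + Uc W 1 * ξ 2 + Uc W 2 * ξ 3) ^ 2
                + (-(ξ 0 * ξ 0) + ξ 1 * ξ 1 + ξ 2 * ξ 2 + ξ 3 * ξ 3))) * hqval
            + (-(Qq R S W * ((U0 W * ξ 0 + Uc W 0 * ξ 1 + Uc W 1 * ξ 2 + Uc W 2 * ξ 3) ^ 2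
                + (-(ξ 0 * ξ 0) + ξ 1 * ξ 1 + ξ 2 * ξ 2 + ξ 3 * ξ 3)
                - (ξ 1 * (Uc W 0 * (U0 W * ξ 0 + Uc W 0 * ξ 1 + Uc W 1 * ξ 2 + Uc W 2 * ξ 3) + ξ 1)
                  + ξ 2 * (Uc W 1 * (U0 W * ξ 0 + Uc W 0 * ξ 1 + Uc W 1 * ξ 2 + Uc W 2 * ξ 3) + ξ 2)
                  + ξ 3 * (Uc W 2 * (U0 W * ξ 0 + Uc W 0 * ξ 1 + Uc W 1 * ξ 2 + Uc W 2 * ξ 3) + ξ 3))))) * hI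
            + (Qq R S W * (U0 W)⁻¹ * ξ 0
                * (U0 W * ξ 0 + Uc W 0 * ξ 1 + Uc W 1 * ξ 2 + Uc W 2 * ξ 3)) * hU0sq
        · intro j
          rw [piExp W ξ j, eP, eU j]
          ring
        · rw [gExp]; simp [ePsi]
        · intro j; simp [ePsi]
        · rw [ePhi, mul_zero]
      · -- light cone case
        by_cases hx : ξ 0 = 0
        · exact mkPhi hx
        obtain ⟨Vd, hVdd⟩ : ∃ Vd : St, Vd = ![0, 0, 0, 0, 0, 0, ξ 0, ξ 1, ξ 2, ξ 3] := ⟨_, rfl⟩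
        have eS : Sc Vd = 0 := by rw [hVdd]; rfl
        have eP : Pc Vd = 0 := by rw [hVdd]; rfl
        have eU : ∀ k : Fin 3, Uc Vd k = 0 := by intro k; rw [hVdd]; fin_cases k <;> rfl
        have ePhi : Phic Vd = 0 := by rw [hVdd]; rfl
        have ePsi : ∀ μ : Fin 4, Psic Vd μ = ξ μ := by intro μ; rw [hVdd]; fin_cases μ <;> rfl
        refine ⟨Vd, ?_, ?_, ?_, ?_, ?_, ?_, ?_⟩
        · intro h; rw [h] at hVdd
          exact hx (congrFun hVdd.symm 6)
        · simp [eS]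
        · simp [eU, eP]
        · intro j; simp [eU j, eP]
        · rw [gExp] at hG ⊢
          simp only [ePsi]
          exact hG
        · intro j; simp [ePsi]; ring
        · rw [ePhi, mul_zero]
      · exact mkPhi hx
  refine ⟨main, main.trans ?_⟩
  unfold Qform
  rw [mul_eq_zero, mul_eq_zero, mul_eq_zero, pow_eq_zero_iff (by norm_num : 3 ≠ 0),
    pow_eq_zero_iff (by norm_num : 3 ≠ 0)]
  tauto

end EN
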